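/- Let n ≠ 0 and let a : ℕ → ℝ satisfy a₀ = 1, a_{i+1} = (i(i+1)+n)/((i+1)(i+2))·a_i. Define c₀ = -1, c_i = (2i-1)a_{i-1} - (2i+1)a_i for i ≥ 1, and b : ℕ → ℝ by b₀ = 1/n, b₁ = -1, b_{i+1} = (c_i + ((i-1)i + n)·b_i)/(i(i+1)) for i ≥ 1. Set W₁(x) = Σ a_i x^{i+1} and W₂(x) = Σ b_i x^i. Then for x ∈ (0,1), W_C(x) = n·(W₂(x) + W₁(x)·ln x) satisfies x(1-x)·W_C''(x) = n·W_C(x). -/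

import Mathlib

/-!
Write `A = ∑ aᵢ xⁱ`, `B = ∑ bᵢ xⁱ`, so that `W_C = n (B + x A log x)`. Both recurrences are
eventually non-expanding up to a bounded additive error, so `a` and `b` grow at most polynomially
and all the series, together with their termwise derivatives, converge on `(-1, 1)`.
Differentiating twice, `x (1 - x) W_C'' = n W_C` splits into the coefficient of `x log x`,
`(1 - x) (x A)'' = n A` (the hypergeometric equation for `A`), and the remaining part
`(1 - x) (x B'' + A + 2 x A') = n B`. Since `(1 - x) ∑ pᵢ xⁱ = p₀ + ∑ (pᵢ₊₁ - pᵢ) xⁱ⁺¹`,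
each of these is, coefficient by coefficient, one of the recurrences for `a` and `b`.
-/

open Filter Asymptotics Topology Set

def HasPolyGrowth (u : ℕ → ℝ) : Prop := ∃ k : ℕ, u =O[atTop] fun i => (i : ℝ) ^ k

noncomputable def powSeries (u : ℕ → ℝ) (x : ℝ) : ℝ := ∑' i, u i * x ^ i

def derivCoeff (u : ℕ → ℝ) (i : ℕ) : ℝ := (i + 1) * u (i + 1)

theorem hasPolyGrowth_derivCoeff {u : ℕ → ℝ} (hu : HasPolyGrowth u) :
    HasPolyGrowth (derivCoeff u) := by
  obtain ⟨k, hk⟩ := hu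
  have hsucc : (fun i : ℕ => (i : ℝ) + 1) =O[atTop] fun i => (i : ℝ) :=
    IsBigO.of_bound 2 <| (eventually_ge_atTop 1).mono fun i hi => by
      have : (1 : ℝ) ≤ i := by exact_mod_cast hi
      simp only [Real.norm_eq_abs]
      rw [abs_of_nonneg (by positivity), abs_of_nonneg (by positivity)]
      linarith
  have hshift : (fun i => u (i + 1)) =O[atTop] fun i : ℕ => (i : ℝ) ^ k := by
    refine (hk.comp_tendsto (tendsto_add_atTop_nat 1)).trans ?_
    simpa [Function.comp_def] using hsucc.pow k
  exact ⟨k + 1, (hsucc.mul hshift).congr (fun i => rfl) (fun i => by ring)⟩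

theorem abs_le_add_mul_of_abs_succ_le {u : ℕ → ℝ} {N : ℕ} {K : ℝ}
    (h : ∀ i ≥ N, |u (i + 1)| ≤ |u i| + K) : ∀ i ≥ N, |u i| ≤ |u N| + K * (i - N) := by
  intro i hi
  induction i, hi using Nat.le_induction with
  | base => simp
  | succ i hi ih => push_cast; linarith [h i hi]

theorem HasPolyGrowth.of_abs_succ_le_add {u : ℕ → ℝ} {N : ℕ} {K : ℝ}
    (h : ∀ i ≥ N, |u (i + 1)| ≤ |u i| + K) : HasPolyGrowth u := by
  refine ⟨1, IsBigO.of_bound (|u N| + |K|) ?_⟩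
  filter_upwards [eventually_ge_atTop (max N 1)] with i hi
  have hN : (N : ℝ) ≤ i := by exact_mod_cast le_of_max_le_left hi
  have h1 : (1 : ℝ) ≤ i := by exact_mod_cast le_of_max_le_right hi
  have hK : K * (i - N) ≤ |K| * i :=
    (mul_le_mul_of_nonneg_right (le_abs_self K) (by linarith)).trans
      (mul_le_mul_of_nonneg_left (by linarith) (abs_nonneg K))
  have := abs_le_add_mul_of_abs_succ_le h i (le_of_max_le_left hi)
  simp only [Real.norm_eq_abs, pow_one, abs_of_nonneg (by linarith : (0:ℝ) ≤ i)]
  nlinarith [abs_nonneg (u N)]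

namespace HasPolyGrowth

variable {u : ℕ → ℝ}

theorem summable_norm (hu : HasPolyGrowth u) {x : ℝ} (hx : |x| < 1) :
    Summable fun i => ‖u i * x ^ i‖ := by
  obtain ⟨k, hk⟩ := hu
  exact summable_norm_mul_geometric_of_norm_lt_one' hx (by simpa using hk)

theorem hasSum (hu : HasPolyGrowth u) {x : ℝ} (hx : |x| < 1) :
    HasSum (fun i => u i * x ^ i) (powSeries u x) :=
  (hu.summable_norm hx).of_norm.hasSum

theorem hasDerivAt (hu : HasPolyGrowth u) {x : ℝ} (hx : |x| < 1) :
    HasDerivAt (powSeries u) (powSeries (derivCoeff u) x) x := by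
  obtain ⟨r, hxr, hr1⟩ := exists_between hx
  have hr0 : 0 ≤ r := (abs_nonneg x).trans hxr.le
  have hbound : Summable fun i => ‖u i‖ * i * r ^ (i - 1) := by
    refine (summable_nat_add_iff 1).mp (((hasPolyGrowth_derivCoeff hu).summable_norm
      (by rwa [abs_of_nonneg hr0])).congr fun i => ?_)
    simp only [derivCoeff, Nat.cast_add, Nat.cast_one, add_tsub_cancel_right, norm_mul,
      norm_pow, Real.norm_eq_abs, abs_of_nonneg hr0, abs_of_nonneg (by positivity : (0:ℝ) ≤ i + 1)]
    ring
  have hmem : x ∈ Ioo (-r) r := abs_lt.mp hxr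
  have key := hasDerivAt_tsum_of_isPreconnected hbound isOpen_Ioo isPreconnected_Ioo
    (g := fun i y => u i * y ^ i) (g' := fun i y => u i * (i * y ^ (i - 1)))
    (fun i y _ => (hasDerivAt_pow i y).const_mul (u i)) (fun i y hy => ?_) hmem
    (hu.summable_norm hx).of_norm hmem
  · have hshift : HasSum (fun i => u i * (i * x ^ (i - 1))) (powSeries (derivCoeff u) x) := by
      refine (hasSum_nat_add_iff' 1).mp ?_
      simpa [derivCoeff, mul_assoc, mul_left_comm] using (hasPolyGrowth_derivCoeff hu).hasSum hx
    rwa [hshift.tsum_eq] at key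
  · rw [norm_mul, norm_mul, norm_pow, mul_assoc]
    gcongr
    · simp
    · exact (abs_lt.mpr hy).le

end HasPolyGrowth

theorem HasSum.natCast_mul_of_derivCoeff {u : ℕ → ℝ} {x s : ℝ}
    (h : HasSum (fun i => derivCoeff u i * x ^ i) s) :
    HasSum (fun i => (i * u i) * x ^ i) (x * s) := by
  refine (hasSum_nat_add_iff' 1).mp ?_
  simpa [derivCoeff, pow_succ, mul_assoc, mul_comm, mul_left_comm] using h.mul_left x

theorem one_sub_mul_eq_of_hasSum {p q : ℕ → ℝ} {x P Q : ℝ}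
    (hP : HasSum (fun i => p i * x ^ i) P) (hQ : HasSum (fun i => q i * x ^ i) Q)
    (h0 : p 0 = q 0) (hsucc : ∀ i, p (i + 1) - p i = q (i + 1)) :
    (1 - x) * P = Q := by
  have hP' : HasSum (fun i => p (i + 1) * x ^ (i + 1)) (P - p 0) :=
    by simpa using (hasSum_nat_add_iff' 1).mpr hP
  have hQ' : HasSum (fun i => q (i + 1) * x ^ (i + 1)) (Q - q 0) :=
    by simpa using (hasSum_nat_add_iff' 1).mpr hQ
  have hxP : HasSum (fun i => p i * x ^ (i + 1)) (x * P) := by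
    simpa [pow_succ, mul_assoc, mul_comm, mul_left_comm] using hP.mul_left x
  have hdiff := hP'.sub hxP
  simp only [← sub_mul, hsucc] at hdiff
  linarith [hdiff.unique hQ']

theorem tsum_mul_pow_succ (u : ℕ → ℝ) (x : ℝ) :
    ∑' i, u i * x ^ (i + 1) = x * ∑' i, u i * x ^ i := by
  rw [← tsum_mul_left]
  exact tsum_congr fun i => by ring

theorem iteratedDeriv_two_add_mul_mul_log {A A' A'' B B' B'' : ℝ → ℝ} {x : ℝ} (hx : 0 < x)
    (hA : ∀ᶠ y in 𝓝 x, HasDerivAt A (A' y) y) (hA' : HasDerivAt A' (A'' x) x)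
    (hB : ∀ᶠ y in 𝓝 x, HasDerivAt B (B' y) y) (hB' : HasDerivAt B' (B'' x) x) :
    iteratedDeriv 2 (fun y => B y + y * A y * Real.log y) x =
      B'' x + (2 * A' x + x * A'' x) * Real.log x + A x / x + 2 * A' x := by
  have hderiv : deriv (fun y => B y + y * A y * Real.log y) =ᶠ[𝓝 x]
      fun y => B' y + (A y + y * A' y) * Real.log y + A y := by
    filter_upwards [hA, hB, lt_mem_nhds hx] with y hAy hBy hy
    refine (hBy.fun_add (((hasDerivAt_id' y).fun_mul hAy).fun_mul
      (Real.hasDerivAt_log hy.ne'))).deriv.trans ?_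
    field_simp
    ring
  have hAx := hA.self_of_nhds
  have hderiv2 := (hB'.fun_add (((hAx.fun_add ((hasDerivAt_id' x).fun_mul hA')).fun_mul
    (Real.hasDerivAt_log hx.ne')))).fun_add hAx
  rw [iteratedDeriv_succ, iteratedDeriv_one, hderiv.deriv_eq, hderiv2.deriv]
  field_simp
  ring

section Recurrences

variable {n : ℝ} {a b c : ℕ → ℝ}

theorem abs_succ_le_of_hypergeometric_rec
    (ha : ∀ i : ℕ, a (i+1) = ((i * (i+1) + n) / ((i+1) * (i+2))) * a i)
    {i : ℕ} (hi : |n| ≤ i) : |a (i + 1)| ≤ |a i| := by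
  have hden : (0 : ℝ) < (i + 1) * (i + 2) := by positivity
  have hratio : |(i * (i + 1) + n) / ((i + 1) * (i + 2))| ≤ 1 := by
    rw [abs_div, abs_of_pos hden, div_le_one hden]
    calc |(i : ℝ) * (i + 1) + n| ≤ i * (i + 1) + |n| :=
          (abs_add_le _ n).trans_eq (by rw [abs_of_nonneg (by positivity)])
      _ ≤ (i + 1) * (i + 2) := by nlinarith
  rw [ha, abs_mul]
  exact mul_le_of_le_one_left (abs_nonneg _) hratio

theorem abs_succ_le_of_log_coeff_rec
    (hc : ∀ i : ℕ, 1 ≤ i → c i = (2*i - 1) * a (i-1) - (2*i + 1) * a i)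
    (hb : ∀ i : ℕ, 1 ≤ i → b (i+1) = (c i + ((i-1) * i + n) * b i) / (i * (i+1)))
    {M : ℝ} {i : ℕ} (hi : 1 ≤ i) (hni : |n| ≤ i) (ha' : |a (i - 1)| ≤ M) (ha : |a i| ≤ M) :
    |b (i + 1)| ≤ |b i| + 4 * M := by
  have hi' : (1 : ℝ) ≤ i := by exact_mod_cast hi
  have hden : (0 : ℝ) < i * (i + 1) := by positivity
  have hcb : |c i| ≤ 4 * i * M := by
    rw [hc i hi]
    calc |(2 * i - 1) * a (i - 1) - (2 * i + 1) * a i|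
        ≤ (2 * i - 1) * |a (i - 1)| + (2 * i + 1) * |a i| := by
          refine (abs_sub _ _).trans ?_
          rw [abs_mul, abs_mul, abs_of_nonneg (by linarith : (0:ℝ) ≤ 2 * i - 1),
            abs_of_nonneg (by positivity : (0:ℝ) ≤ 2 * i + 1)]
      _ ≤ (2 * i - 1) * M + (2 * i + 1) * M := by gcongr; linarith
      _ = 4 * i * M := by ring
  have hcoef : |((i : ℝ) - 1) * i + n| ≤ i * (i + 1) := by
    calc |((i : ℝ) - 1) * i + n| ≤ (i - 1) * i + |n| :=
          (abs_add_le _ n).trans_eq (by rw [abs_of_nonneg (by nlinarith)])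
      _ ≤ i * (i + 1) := by nlinarith
  have hM : 0 ≤ M := (abs_nonneg _).trans ha
  rw [hb i hi, abs_div, abs_of_pos hden, div_le_iff₀ hden]
  calc |c i + ((i - 1) * i + n) * b i| ≤ 4 * i * M + i * (i + 1) * |b i| := by
        refine (abs_add_le _ _).trans (add_le_add hcb ?_)
        rw [abs_mul]
        exact mul_le_mul_of_nonneg_right hcoef (abs_nonneg _)
    _ ≤ (|b i| + 4 * M) * (i * (i + 1)) := by nlinarith [mul_nonneg hM (sq_nonneg (i : ℝ))]

theorem hasPolyGrowth_of_hypergeometric_rec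
    (ha : ∀ i : ℕ, a (i+1) = ((i * (i+1) + n) / ((i+1) * (i+2))) * a i) : HasPolyGrowth a := by
  obtain ⟨N, hN⟩ := exists_nat_ge |n|
  refine HasPolyGrowth.of_abs_succ_le_add (N := N) (K := 0) fun i hi => ?_
  rw [add_zero]
  exact abs_succ_le_of_hypergeometric_rec ha (hN.trans (by exact_mod_cast hi))

theorem hasPolyGrowth_of_log_coeff_rec
    (ha : ∀ i : ℕ, a (i+1) = ((i * (i+1) + n) / ((i+1) * (i+2))) * a i)
    (hc : ∀ i : ℕ, 1 ≤ i → c i = (2*i - 1) * a (i-1) - (2*i + 1) * a i)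
    (hb : ∀ i : ℕ, 1 ≤ i → b (i+1) = (c i + ((i-1) * i + n) * b i) / (i * (i+1))) :
    HasPolyGrowth b := by
  obtain ⟨N, hN⟩ := exists_nat_ge |n|
  have hNi {i : ℕ} (hi : N ≤ i) : |n| ≤ i := hN.trans (by exact_mod_cast hi)
  have haN : ∀ i ≥ N, |a i| ≤ |a N| := by
    simpa using abs_le_add_mul_of_abs_succ_le (K := 0) fun i hi => by
      rw [add_zero]; exact abs_succ_le_of_hypergeometric_rec ha (hNi hi)
  refine HasPolyGrowth.of_abs_succ_le_add (N := N + 1) (K := 4 * |a N|) fun i hi => ?_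
  exact abs_succ_le_of_log_coeff_rec hc hb (by omega) (hNi (by omega)) (haN _ (by omega))
    (haN _ (by omega))

theorem hypergeometric_ode_identity
    (ha : ∀ i : ℕ, a (i+1) = ((i * (i+1) + n) / ((i+1) * (i+2))) * a i)
    (hA : HasPolyGrowth a) {x : ℝ} (hx : |x| < 1) :
    (1 - x) * (2 * powSeries (derivCoeff a) x + x * powSeries (derivCoeff (derivCoeff a)) x) =
      n * powSeries a x := by
  have hDA := hasPolyGrowth_derivCoeff hA
  refine one_sub_mul_eq_of_hasSum (p := fun i => (i + 1) * (i + 2) * a (i + 1))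
    (q := fun i => n * a i) ?_ (by simpa [mul_assoc] using (hA.hasSum hx).mul_left n) ?_ ?_
  · refine (((hDA.hasSum hx).mul_left 2).add
      ((hasPolyGrowth_derivCoeff hDA).hasSum hx).natCast_mul_of_derivCoeff).congr_fun fun i => ?_
    simp only [derivCoeff]
    ring
  · rw [ha 0]
    field_simp
    ring
  · intro i
    rw [ha (i + 1)]
    push_cast
    field_simp
    ring

theorem log_coeff_ode_identity (hn : n ≠ 0) (ha0 : a 0 = 1)
    (hc : ∀ i : ℕ, 1 ≤ i → c i = (2*i - 1) * a (i-1) - (2*i + 1) * a i)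
    (hb0 : b 0 = 1/n)
    (hb : ∀ i : ℕ, 1 ≤ i → b (i+1) = (c i + ((i-1) * i + n) * b i) / (i * (i+1)))
    (hA : HasPolyGrowth a) (hB : HasPolyGrowth b) {x : ℝ} (hx : |x| < 1) :
    (1 - x) * (x * powSeries (derivCoeff (derivCoeff b)) x + powSeries a x +
      2 * (x * powSeries (derivCoeff a) x)) = n * powSeries b x := by
  refine one_sub_mul_eq_of_hasSum (p := fun i => i * (i + 1) * b (i + 1) + (2 * i + 1) * a i)
    (q := fun i => n * b i) ?_ (by simpa [mul_assoc] using (hB.hasSum hx).mul_left n) ?_ ?_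
  · refine ((((hasPolyGrowth_derivCoeff (hasPolyGrowth_derivCoeff hB)).hasSum
      hx).natCast_mul_of_derivCoeff.add (hA.hasSum hx)).add
      (((hasPolyGrowth_derivCoeff hA).hasSum hx).natCast_mul_of_derivCoeff.mul_left 2)).congr_fun
      fun i => ?_
    simp only [derivCoeff]
    ring
  · simp [ha0, hb0, hn]
  · intro i
    rw [hb (i + 1) (by omega), hc (i + 1) (by omega)]
    push_cast
    simp only [add_tsub_cancel_right]
    field_simp
    ring

end Recurrences

theorem frobenius_WC_general (n : ℝ) (hn : n ≠ 0) (a b c : ℕ → ℝ)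
    (ha0 : a 0 = 1)
    (ha : ∀ i : ℕ, a (i+1) = ((i * (i+1) + n) / ((i+1) * (i+2))) * a i)
    (hc : ∀ i : ℕ, 1 ≤ i → c i = (2*i - 1) * a (i-1) - (2*i + 1) * a i)
    (hb0 : b 0 = 1/n)
    (hb : ∀ i : ℕ, 1 ≤ i → b (i+1) = (c i + ((i-1) * i + n) * b i) / (i * (i+1))) :
    ∀ x ∈ Set.Ioo (0:ℝ) 1,
      x * (1-x) * iteratedDeriv 2
        (fun x : ℝ => n * ((∑' i : ℕ, b i * x ^ i) +
          (∑' i : ℕ, a i * x ^ (i+1)) * Real.log x)) x =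
      n * (n * ((∑' i : ℕ, b i * x ^ i) +
          (∑' i : ℕ, a i * x ^ (i+1)) * Real.log x)) := by
  rintro x ⟨hx0, hx1⟩
  have hx : |x| < 1 := abs_lt.mpr ⟨by linarith, hx1⟩
  have hnhds : ∀ᶠ y in 𝓝 x, |y| < 1 :=
    continuous_abs.continuousAt.eventually_lt continuousAt_const hx
  have hA := hasPolyGrowth_of_hypergeometric_rec ha
  have hB := hasPolyGrowth_of_log_coeff_rec ha hc hb
  have hW : ∀ y : ℝ, (∑' i, b i * y ^ i) + (∑' i, a i * y ^ (i + 1)) * Real.log y =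
      powSeries b y + y * powSeries a y * Real.log y := fun y => by
    rw [tsum_mul_pow_succ]; rfl
  simp only [hW]
  rw [iteratedDeriv_const_mul_field, iteratedDeriv_two_add_mul_mul_log hx0
    (hnhds.mono fun y hy => hA.hasDerivAt hy) ((hasPolyGrowth_derivCoeff hA).hasDerivAt hx)
    (hnhds.mono fun y hy => hB.hasDerivAt hy) ((hasPolyGrowth_derivCoeff hB).hasDerivAt hx)]
  have hdiv : x * (powSeries a x / x) = powSeries a x := mul_div_cancel₀ _ hx0.ne'
  linear_combination (n * x * Real.log x) * hypergeometric_ode_identity ha hA hx +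
    n * log_coeff_ode_identity hn ha0 hc hb0 hb hA hB hx + n * (1 - x) * hdiv

theorem frobenius_WC (n : ℝ) (hn : n ≠ 0) (a b c : ℕ → ℝ)
    (ha0 : a 0 = 1)
    (ha : ∀ i : ℕ, a (i+1) = ((i * (i+1) + n) / ((i+1) * (i+2))) * a i)
    (hc0 : c 0 = -1)
    (hc : ∀ i : ℕ, 1 ≤ i → c i = (2*i - 1) * a (i-1) - (2*i + 1) * a i)
    (hb0 : b 0 = 1/n) (hb1 : b 1 = -1)
    (hb : ∀ i : ℕ, 1 ≤ i → b (i+1) = (c i + ((i-1) * i + n) * b i) / (i * (i+1))) :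
    ∀ x ∈ Set.Ioo (0:ℝ) 1,
      x * (1-x) * iteratedDeriv 2
        (fun x : ℝ => n * ((∑' i : ℕ, b i * x ^ i) +
          (∑' i : ℕ, a i * x ^ (i+1)) * Real.log x)) x =
      n * (n * ((∑' i : ℕ, b i * x ^ i) +
          (∑' i : ℕ, a i * x ^ (i+1)) * Real.log x)) :=
  frobenius_WC_general n hn a b c ha0 ha hc hb0 hb
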